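/- Bochner–Weitzenböck-type inequality for gauged fields: Let ψ_i : ℝ² → ℝ^m (i = 1,2) and A_i : ℝ² → so(m) be smooth with appropriate decay, set D_i := ∂_i + A_i, and suppose the torsion-free condition D_1ψ_2 = D_2ψ_1 and the curvature identity [D_1,D_2] = −ψ_1 ∧ ψ_2 hold. Then ∫_{ℝ²} |D_jψ_i|² + ½|ψ_i ∧ ψ_j|² dx ≤ ∫_{ℝ²} |D_iψ_i|² dx (summation over repeated indices i,j ∈ {1,2}). -/

import Mathlib

open MeasureTheory Set

noncomputable section

/-- The `i`-th standard coordinate direction in `ℝ²`. -/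
def e2 (i : Fin 2) : EuclideanSpace ℝ (Fin 2) := EuclideanSpace.single i 1

/-- Action of an `m × m` real matrix on a vector of `ℝ^m`. -/
def matAct (m : ℕ) (M : Fin m → Fin m → ℝ) (v : EuclideanSpace ℝ (Fin m)) :
    EuclideanSpace ℝ (Fin m) :=
  WithLp.toLp 2 (fun a => ∑ b, M a b * v b : Fin m → ℝ)

/-- The covariant derivative `D_i f = ∂_i f + A_i f`. -/
def Dop (m : ℕ) (A : Fin 2 → EuclideanSpace ℝ (Fin 2) → Fin m → Fin m → ℝ)
    (f : EuclideanSpace ℝ (Fin 2) → EuclideanSpace ℝ (Fin m)) (i : Fin 2)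
    (x : EuclideanSpace ℝ (Fin 2)) : EuclideanSpace ℝ (Fin m) :=
  fderiv ℝ f x (e2 i) + matAct m (A i x) (f x)

/-- The wedge product `v ∧ w = v wᵀ − w vᵀ` of two vectors in `ℝ^m`. -/
def wedge (m : ℕ) (v w : EuclideanSpace ℝ (Fin m)) : Fin m → Fin m → ℝ :=
  fun a b => v a * w b - w a * v b

namespace S16

abbrev E2 := EuclideanSpace ℝ (Fin 2)

/-- directional derivative of a scalar function -/
def pd (j : Fin 2) (f : E2 → ℝ) (x : E2) : ℝ := fderiv ℝ f x (e2 j)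

variable {m : ℕ}

lemma fderiv_euclid_apply {f : E2 → EuclideanSpace ℝ (Fin m)} {x : E2}
    (hf : DifferentiableAt ℝ f x) (w : E2) (a : Fin m) :
    fderiv ℝ f x w a = fderiv ℝ (fun y => f y a) x w := by
  have h : (fun y => f y a) = (EuclideanSpace.proj a : EuclideanSpace ℝ (Fin m) →L[ℝ] ℝ) ∘ f := rfl
  rw [h, fderiv_comp x (EuclideanSpace.proj a).differentiableAt hf,
    ContinuousLinearMap.fderiv]
  rfl

lemma fderiv_pi2_apply {f : E2 → (Fin m → Fin m → ℝ)} {x : E2}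
    (hf : DifferentiableAt ℝ f x) (w : E2) (a b : Fin m) :
    fderiv ℝ f x w a b = fderiv ℝ (fun y => f y a b) x w := by
  have h : (fun y => f y a b) =
      ((ContinuousLinearMap.proj b : (Fin m → ℝ) →L[ℝ] ℝ).comp
        (ContinuousLinearMap.proj a : (Fin m → Fin m → ℝ) →L[ℝ] (Fin m → ℝ))) ∘ f := rfl
  rw [h, fderiv_comp x (ContinuousLinearMap.differentiableAt _) hf,
    ContinuousLinearMap.fderiv]
  rfl

lemma contDiff_pd {f : E2 → ℝ} (hf : ContDiff ℝ (⊤ : ℕ∞) f) (j : Fin 2) :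
    ContDiff ℝ (⊤ : ℕ∞) (pd j f) := by
  have h1 : ContDiff ℝ (⊤ : ℕ∞) (fderiv ℝ f) := hf.fderiv_right (by simp)
  exact (ContinuousLinearMap.apply ℝ ℝ (e2 j)).contDiff.comp h1

lemma pd_comm {f : E2 → ℝ} (hf : ContDiff ℝ (⊤ : ℕ∞) f) (i j : Fin 2) (x : E2) :
    pd i (pd j f) x = pd j (pd i f) x := by
  have hsymm : IsSymmSndFDerivAt ℝ f x := hf.contDiffAt.isSymmSndFDerivAt (by rw [minSmoothness_of_isRCLikeNormedField]; exact le_trans (b := ((2 : ℕ∞) : WithTop ℕ∞)) le_rfl (WithTop.coe_le_coe.2 le_top))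
  have key : ∀ k l : Fin 2, pd k (pd l f) x = fderiv ℝ (fderiv ℝ f) x (e2 k) (e2 l) := by
    intro k l
    have h : pd l f = (ContinuousLinearMap.apply ℝ ℝ (e2 l)) ∘ (fderiv ℝ f) := rfl
    have hd : DifferentiableAt ℝ (fderiv ℝ f) x :=
      ((hf.fderiv_right (m := (⊤ : ℕ∞)) ((by simp))).differentiable (by simp)) x
    rw [pd, h, fderiv_comp x (ContinuousLinearMap.differentiableAt _) hd,
      ContinuousLinearMap.fderiv]
    rfl
  rw [key, key]
  exact hsymm (e2 i) (e2 j)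


lemma pd_add {f g : E2 → ℝ} {x : E2} (hf : DifferentiableAt ℝ f x)
    (hg : DifferentiableAt ℝ g x) (j : Fin 2) :
    pd j (fun y => f y + g y) x = pd j f x + pd j g x := by
  simp [pd, fderiv_fun_add hf hg]

lemma pd_mul {f g : E2 → ℝ} {x : E2} (hf : DifferentiableAt ℝ f x)
    (hg : DifferentiableAt ℝ g x) (j : Fin 2) :
    pd j (fun y => f y * g y) x = pd j f x * g x + f x * pd j g x := by
  simp [pd, fderiv_fun_mul hf hg]; ring

lemma pd_sum {ι : Type*} (s : Finset ι) {f : ι → E2 → ℝ} {x : E2}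
    (hf : ∀ i ∈ s, DifferentiableAt ℝ (f i) x) (j : Fin 2) :
    pd j (fun y => ∑ i ∈ s, f i y) x = ∑ i ∈ s, pd j (f i) x := by
  simp [pd, fderiv_fun_sum hf]

lemma pd_zero_of_nmem_tsupport {f : E2 → ℝ} {x : E2} (j : Fin 2)
    (hx : x ∉ tsupport f) : pd j f x = 0 := by
  have : fderiv ℝ f x = 0 := by
    by_contra h
    exact hx (support_fderiv_subset ℝ (Function.mem_support.2 h))
  simp [pd, this]

lemma hcs_pd {f : E2 → ℝ} (hf : HasCompactSupport f) (j : Fin 2) :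
    HasCompactSupport (pd j f) :=
  HasCompactSupport.intro hf (fun _ hx => pd_zero_of_nmem_tsupport j hx)

lemma integral_pd_eq_zero {f : E2 → ℝ} (hf : ContDiff ℝ (⊤ : ℕ∞) f)
    (hsupp : HasCompactSupport f) (j : Fin 2) :
    ∫ x, pd j f x = 0 := by
  have hd : Differentiable ℝ f := hf.differentiable (by simp)
  have h1 : Differentiable ℝ (fun _ : E2 => (1:ℝ)) := differentiable_const 1
  have hint1 : Integrable (fun x : E2 => fderiv ℝ (fun _ : E2 => (1:ℝ)) x (e2 j) * f x) := by
    simp [fderiv_const]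
  have hint2 : Integrable (fun x : E2 => (1:ℝ) * fderiv ℝ f x (e2 j)) := by
    simp only [one_mul]
    exact ((contDiff_pd hf j).continuous).integrable_of_hasCompactSupport (hcs_pd hsupp j)
  have hint3 : Integrable (fun x : E2 => (1:ℝ) * f x) := by
    simp only [one_mul]
    exact hf.continuous.integrable_of_hasCompactSupport hsupp
  have := integral_mul_fderiv_eq_neg_fderiv_mul_of_integrable hint1 hint2 hint3 (fun x _ => h1 x) (fun x _ => hd x)
  simpa [pd, fderiv_const] using this

end S16

open Finset in


private lemma antisym_swap {m : ℕ} (M : Fin m → Fin m → ℝ) (hM : ∀ a b, M a b = -M b a)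
    (r s : Fin m → ℝ) :
    ∑ a, ∑ b, M a b * r b * s a = -∑ a, ∑ b, M a b * r a * s b := by
  rw [Finset.sum_comm, ← Finset.sum_neg_distrib]
  apply Finset.sum_congr rfl; intro a _
  rw [← Finset.sum_neg_distrib]
  apply Finset.sum_congr rfl; intro b _
  rw [hM b a]; ring

private lemma algebra_key {m : ℕ} (u v du0 du1 dv0 dv1 D00 D01 D10 D11 : Fin m → ℝ)
    (P Q : Fin m → Fin m → ℝ)
    (hP : ∀ a b, P a b = -P b a) (hQ : ∀ a b, Q a b = -Q b a)
    (hD00 : ∀ a, D00 a = du0 a + ∑ b, P a b * u b)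
    (hD01 : ∀ a, D01 a = du1 a + ∑ b, Q a b * u b)
    (hD10 : ∀ a, D10 a = dv0 a + ∑ b, P a b * v b)
    (hD11 : ∀ a, D11 a = dv1 a + ∑ b, Q a b * v b)
    (htor : ∀ a, D10 a = D01 a) :
    ∑ a, (D00 a + D11 a)^2
      = (((∑ a, (D00 a)^2 + ∑ a, (D01 a)^2) + (∑ a, (D10 a)^2 + ∑ a, (D11 a)^2))
        + (1/2) * (∑ a, ∑ b, (u a * v b - v a * u b)^2
                   + ∑ a, ∑ b, (v a * u b - u a * v b)^2))
        + 2 * (∑ a, (du0 a * D11 a - du1 a * D10 a)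
             + ∑ a, u a * ∑ b, ((-(u a * v b - v a * u b)
                  - ∑ c, (P a c * Q c b - Q a c * P c b)) * v b
                  + (Q a b * dv0 b - P a b * dv1 b))) := by
  have hdu0 : ∀ a, du0 a = D00 a - ∑ b, P a b * u b := fun a => by
    have := hD00 a; linarith
  have hdu1 : ∀ a, du1 a = D01 a - ∑ b, Q a b * u b := fun a => by
    have := hD01 a; linarith
  have hdv0 : ∀ a, dv0 a = D10 a - ∑ b, P a b * v b := fun a => by
    have := hD10 a; linarith
  have hdv1 : ∀ a, dv1 a = D11 a - ∑ b, Q a b * v b := fun a => by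
    have := hD11 a; linarith
  -- expand the square
  have h1 : ∑ a, (D00 a + D11 a)^2
      = (∑ a, (D00 a)^2 + ∑ a, (D11 a)^2) + 2 * ∑ a, D00 a * D11 a := by
    rw [Finset.mul_sum, ← Finset.sum_add_distrib, ← Finset.sum_add_distrib]
    exact Finset.sum_congr rfl fun a _ => by ring
  have h2 : ∑ a, (D10 a)^2 = ∑ a, (D01 a)^2 :=
    Finset.sum_congr rfl fun a _ => by rw [htor a]
  -- wedge sums
  have hW1 : ∑ a, ∑ b, (u a * v b - v a * u b)^2
      = 2 * ((∑ a, u a * u a) * (∑ a, v a * v a) - (∑ a, u a * v a) * (∑ a, u a * v a)) := by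
    have hin : ∀ a, ∑ b, (u a * v b - v a * u b)^2
        = (u a * u a) * (∑ b, v b * v b) - (2 * (u a * v a)) * (∑ b, u b * v b)
          + (v a * v a) * (∑ b, u b * u b) := by
      intro a
      rw [Finset.mul_sum, Finset.mul_sum, Finset.mul_sum, ← Finset.sum_sub_distrib,
        ← Finset.sum_add_distrib]
      exact Finset.sum_congr rfl fun b _ => by ring
    rw [Finset.sum_congr rfl fun a _ => hin a]
    rw [Finset.sum_add_distrib, Finset.sum_sub_distrib, ← Finset.sum_mul, ← Finset.sum_mul,
      ← Finset.sum_mul]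
    rw [show (∑ i, 2 * (u i * v i)) = 2 * ∑ i, u i * v i from by
      rw [Finset.mul_sum]]
    ring
  have hW2 : ∑ a, ∑ b, (v a * u b - u a * v b)^2
      = ∑ a, ∑ b, (u a * v b - v a * u b)^2 :=
    Finset.sum_congr rfl fun a _ => Finset.sum_congr rfl fun b _ => by ring
  -- group 1
  have hG1 : ∑ a, (du0 a * D11 a - du1 a * D10 a)
      = ∑ a, (D00 a * D11 a - D01 a * D10 a)
        - ∑ a, ∑ b, P a b * u b * D11 a + ∑ a, ∑ b, Q a b * u b * D10 a := by
    rw [← Finset.sum_sub_distrib, ← Finset.sum_add_distrib]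
    apply Finset.sum_congr rfl; intro a _
    rw [hdu0 a, hdu1 a, show (∑ b, P a b * u b * D11 a) = (∑ b, P a b * u b) * D11 a from
      (Finset.sum_mul ..).symm, show (∑ b, Q a b * u b * D10 a) = (∑ b, Q a b * u b) * D10 a from
      (Finset.sum_mul ..).symm]
    ring
  have hR1 : ∑ a, ∑ b, P a b * u b * D11 a = -∑ a, ∑ b, P a b * u a * D11 b :=
    antisym_swap P hP u D11
  have hR2 : ∑ a, ∑ b, Q a b * u b * D10 a = -∑ a, ∑ b, Q a b * u a * D10 b :=
    antisym_swap Q hQ u D10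
  -- group 2+3 : the big inner sum
  have hS2 : ∑ a, u a * ∑ b, ((-(u a * v b - v a * u b)
                  - ∑ c, (P a c * Q c b - Q a c * P c b)) * v b
                  + (Q a b * dv0 b - P a b * dv1 b))
      = -((∑ a, u a * u a) * (∑ a, v a * v a) - (∑ a, u a * v a) * (∑ a, u a * v a))
        + ∑ a, ∑ b, Q a b * u a * D10 b - ∑ a, ∑ b, P a b * u a * D11 b := by
    -- step 1: pointwise-in-(a,b) rewriting to a flat 7-term chain
    have hmid : ∀ a, ∑ b, ((-(u a * v b - v a * u b)
                  - ∑ c, (P a c * Q c b - Q a c * P c b)) * v b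
                  + (Q a b * dv0 b - P a b * dv1 b))
        = ∑ b, (-(u a * (v b * v b)) + v a * (u b * v b)
            - (∑ c, (P a c * Q c b - Q a c * P c b)) * v b
            + Q a b * D10 b - Q a b * ∑ c, P b c * v c
            - P a b * D11 b + P a b * ∑ c, Q b c * v c) := by
      intro a
      refine Finset.sum_congr rfl fun b _ => ?_
      rw [hdv0 b, hdv1 b]; ring
    -- step 2: per-a splitting
    have hSa : ∀ a, u a * ∑ b, ((-(u a * v b - v a * u b)
                  - ∑ c, (P a c * Q c b - Q a c * P c b)) * v b
                  + (Q a b * dv0 b - P a b * dv1 b))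
        = (u a * v a * ∑ b, u b * v b - u a * u a * ∑ b, v b * v b)
          - u a * ∑ b, ((∑ c, (P a c * Q c b - Q a c * P c b)) * v b)
          + u a * ∑ b, (Q a b * D10 b)
          - u a * ∑ b, (Q a b * ∑ c, P b c * v c)
          - u a * ∑ b, (P a b * D11 b)
          + u a * ∑ b, (P a b * ∑ c, Q b c * v c) := by
      intro a
      rw [hmid a]
      rw [Finset.sum_add_distrib, Finset.sum_sub_distrib, Finset.sum_sub_distrib,
        Finset.sum_add_distrib, Finset.sum_sub_distrib, Finset.sum_add_distrib,
        Finset.sum_neg_distrib]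
      rw [show (∑ b, u a * (v b * v b)) = u a * ∑ b, v b * v b from (Finset.mul_sum ..).symm,
        show (∑ b, v a * (u b * v b)) = v a * ∑ b, u b * v b from (Finset.mul_sum ..).symm]
      ring
    rw [Finset.sum_congr rfl fun a _ => hSa a]
    rw [Finset.sum_add_distrib, Finset.sum_sub_distrib, Finset.sum_sub_distrib,
      Finset.sum_add_distrib, Finset.sum_sub_distrib]
    -- J1
    have hJ1 : ∑ a, (u a * v a * ∑ b, u b * v b - u a * u a * ∑ b, v b * v b)
        = (∑ a, u a * v a) * (∑ a, u a * v a) - (∑ a, u a * u a) * (∑ a, v a * v a) := by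
      rw [Finset.sum_sub_distrib, ← Finset.sum_mul, ← Finset.sum_mul]
    -- J2 = J6 - J4
    have hJ24 : ∑ a, u a * ∑ b, ((∑ c, (P a c * Q c b - Q a c * P c b)) * v b)
        = ∑ a, u a * ∑ b, (P a b * ∑ c, Q b c * v c)
          - ∑ a, u a * ∑ b, (Q a b * ∑ c, P b c * v c) := by
      rw [← Finset.sum_sub_distrib]
      refine Finset.sum_congr rfl fun a _ => ?_
      have l1 : u a * ∑ b, ((∑ c, (P a c * Q c b - Q a c * P c b)) * v b)
          = ∑ b, ∑ c, u a * ((P a c * Q c b - Q a c * P c b) * v b) := by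
        rw [Finset.mul_sum]
        refine Finset.sum_congr rfl fun b _ => ?_
        rw [Finset.sum_mul, Finset.mul_sum]
      have l2 : u a * ∑ b, (P a b * ∑ c, Q b c * v c)
          = ∑ b, ∑ c, u a * (P a b * (Q b c * v c)) := by
        rw [Finset.mul_sum]
        refine Finset.sum_congr rfl fun b _ => ?_
        rw [Finset.mul_sum, Finset.mul_sum]
      have l3 : u a * ∑ b, (Q a b * ∑ c, P b c * v c)
          = ∑ b, ∑ c, u a * (Q a b * (P b c * v c)) := by
        rw [Finset.mul_sum]
        refine Finset.sum_congr rfl fun b _ => ?_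
        rw [Finset.mul_sum, Finset.mul_sum]
      rw [l1, l2, l3, ← Finset.sum_sub_distrib]
      rw [show (∑ b, ∑ c, u a * ((P a c * Q c b - Q a c * P c b) * v b))
          = ∑ b, ∑ c, u a * ((P a b * Q b c - Q a b * P b c) * v c) from Finset.sum_comm]
      refine Finset.sum_congr rfl fun b _ => ?_
      rw [← Finset.sum_sub_distrib]
      exact Finset.sum_congr rfl fun c _ => by ring
    -- J3, J5
    have hJ3 : ∑ a, u a * ∑ b, (Q a b * D10 b) = ∑ a, ∑ b, Q a b * u a * D10 b := by
      refine Finset.sum_congr rfl fun a _ => ?_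
      rw [Finset.mul_sum]
      exact Finset.sum_congr rfl fun b _ => by ring
    have hJ5 : ∑ a, u a * ∑ b, (P a b * D11 b) = ∑ a, ∑ b, P a b * u a * D11 b := by
      refine Finset.sum_congr rfl fun a _ => ?_
      rw [Finset.mul_sum]
      exact Finset.sum_congr rfl fun b _ => by ring
    rw [hJ1, hJ24, hJ3, hJ5]
    ring
  -- final assembly
  rw [h1, h2, hW1, hW2, hW1, hG1, hR1, hR2, hS2,
    show (∑ a, (D00 a * D11 a - D01 a * D10 a))
        = ∑ a, D00 a * D11 a - ∑ a, D01 a * D10 a from Finset.sum_sub_distrib ..,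
    show (∑ a, D01 a * D10 a) = ∑ a, (D01 a)^2 from
      Finset.sum_congr rfl fun a _ => by rw [htor a]; ring]
  ring

/-- **Bochner–Weitzenböck-type inequality for gauged fields:** under the
zero-torsion and constant-curvature identities,
`∫ |D_jψ_i|² + ½|ψ_i ∧ ψ_j|² ≤ ∫ |D_iψ_i|²` (summing repeated indices). -/
theorem stmt16 (m : ℕ)
    (ψ : Fin 2 → EuclideanSpace ℝ (Fin 2) → EuclideanSpace ℝ (Fin m))
    (A : Fin 2 → EuclideanSpace ℝ (Fin 2) → Fin m → Fin m → ℝ)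
    (hψ : ∀ i, ContDiff ℝ (⊤ : ℕ∞) (ψ i))
    (hA : ∀ i, ContDiff ℝ (⊤ : ℕ∞) (A i))
    (hψsupp : ∀ i, HasCompactSupport (ψ i))
    (hanti : ∀ i x a b, A i x a b = -A i x b a)
    (htor : ∀ x, Dop m A (ψ 1) 0 x = Dop m A (ψ 0) 1 x)
    (hcurv : ∀ (α β : Fin 2) (x : EuclideanSpace ℝ (Fin 2)),
      fderiv ℝ (A β) x (e2 α) - fderiv ℝ (A α) x (e2 β)
        = fun a b => -(wedge m (ψ α x) (ψ β x) a b)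
            - ∑ c, (A α x a c * A β x c b - A β x a c * A α x c b)) :
    (∫ x, ((∑ i, ∑ j, ‖Dop m A (ψ i) j x‖ ^ 2)
        + (1 / 2) * ∑ i, ∑ j, ∑ a, ∑ b, (wedge m (ψ i x) (ψ j x) a b) ^ 2))
      ≤ ∫ x, ‖∑ i, Dop m A (ψ i) i x‖ ^ 2 := by
  classical
  have hψd : ∀ i, Differentiable ℝ (ψ i) := fun i => (hψ i).differentiable (by simp)
  have hAd : ∀ i, Differentiable ℝ (A i) := fun i => (hA i).differentiable (by simp)
  have hψc : ∀ i (a : Fin m), ContDiff ℝ (⊤ : ℕ∞) (fun y => ψ i y a) := by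
    intro i a
    exact ((EuclideanSpace.proj a : EuclideanSpace ℝ (Fin m) →L[ℝ] ℝ).contDiff).comp (hψ i)
  have hAc : ∀ i (a b : Fin m), ContDiff ℝ (⊤ : ℕ∞) (fun y => A i y a b) := by
    intro i a b
    exact (((ContinuousLinearMap.proj (R := ℝ) (φ := fun _ : Fin m => ℝ) b).comp
      (ContinuousLinearMap.proj (R := ℝ) (φ := fun _ : Fin m => Fin m → ℝ) a)).contDiff).comp
      (hA i)
  -- scalar form of the covariant derivative
  have hDop : ∀ i j (x : EuclideanSpace ℝ (Fin 2)) (a : Fin m),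
      Dop m A (ψ i) j x a
        = S16.pd j (fun y => ψ i y a) x + ∑ b, A j x a b * ψ i x b := by
    intro i j x a
    show fderiv ℝ (ψ i) x (e2 j) a + (∑ b, A j x a b * ψ i x b) = _
    rw [S16.fderiv_euclid_apply (hψd i x)]
    rfl
  have hDfeq : ∀ i j (a : Fin m), (fun y => Dop m A (ψ i) j y a)
      = fun y => S16.pd j (fun z => ψ i z a) y + ∑ b, A j y a b * ψ i y b :=
    fun i j a => funext fun y => hDop i j y a
  have hpdψ : ∀ i j (a : Fin m), ContDiff ℝ (⊤ : ℕ∞) (S16.pd j (fun y => ψ i y a)) :=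
    fun i j a => S16.contDiff_pd (hψc i a) j
  have hDfc : ∀ i j (a : Fin m), ContDiff ℝ (⊤ : ℕ∞) (fun y => Dop m A (ψ i) j y a) := by
    intro i j a
    rw [hDfeq i j a]
    exact (hpdψ i j a).add (ContDiff.sum fun b _ => (hAc j a b).mul (hψc i b))
  -- the two potential functions
  set G : Fin 2 → EuclideanSpace ℝ (Fin 2) → ℝ :=
    fun j y => ∑ a, ψ 0 y a * Dop m A (ψ 1) j y a with hGdef
  have hGc : ∀ j, ContDiff ℝ (⊤ : ℕ∞) (G j) := fun j =>
    ContDiff.sum fun a _ => (hψc 0 a).mul (hDfc 1 j a)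
  have hGsupp : ∀ j, HasCompactSupport (G j) := by
    intro j
    apply HasCompactSupport.intro (hψsupp 0)
    intro x hx
    have h0 : ψ 0 x = 0 := image_eq_zero_of_notMem_tsupport hx
    simp only [hGdef]
    refine Finset.sum_eq_zero fun a _ => ?_
    have : ψ 0 x a = 0 := by rw [h0]; rfl
    rw [this, zero_mul]
  -- derivative of G
  have hpdG : ∀ j k (x : EuclideanSpace ℝ (Fin 2)), S16.pd k (G j) x
      = ∑ a, (S16.pd k (fun y => ψ 0 y a) x * Dop m A (ψ 1) j x a
          + ψ 0 x a * S16.pd k (fun y => Dop m A (ψ 1) j y a) x) := by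
    intro j k x
    rw [hGdef]
    rw [S16.pd_sum Finset.univ (fun a _ => (((hψc 0 a).differentiable (by simp)) x).fun_mul
      (((hDfc 1 j a).differentiable (by simp)) x)) k]
    exact Finset.sum_congr rfl fun a _ =>
      S16.pd_mul (((hψc 0 a).differentiable (by simp)) x) (((hDfc 1 j a).differentiable (by simp)) x) k
  -- derivative of the covariant derivative components
  have hpdDf : ∀ j k (a : Fin m) (x : EuclideanSpace ℝ (Fin 2)),
      S16.pd k (fun y => Dop m A (ψ 1) j y a) x
        = S16.pd k (S16.pd j (fun z => ψ 1 z a)) x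
          + ∑ b, (S16.pd k (fun y => A j y a b) x * ψ 1 x b
              + A j x a b * S16.pd k (fun y => ψ 1 y b) x) := by
    intro j k a x
    rw [hDfeq 1 j a]
    have hd1 : DifferentiableAt ℝ (S16.pd j (fun z => ψ 1 z a)) x :=
      ((hpdψ 1 j a).differentiable (by simp)) x
    have hd2 : DifferentiableAt ℝ (fun y => ∑ b, A j y a b * ψ 1 y b) x :=
      DifferentiableAt.fun_sum fun b _ => (((hAc j a b).differentiable (by simp)) x).mul
        (((hψc 1 b).differentiable (by simp)) x)
    rw [S16.pd_add hd1 hd2 k]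
    congr 1
    rw [S16.pd_sum Finset.univ (fun b _ => (((hAc j a b).differentiable (by simp)) x).fun_mul
      (((hψc 1 b).differentiable (by simp)) x)) k]
    exact Finset.sum_congr rfl fun b _ =>
      S16.pd_mul (((hAc j a b).differentiable (by simp)) x) (((hψc 1 b).differentiable (by simp)) x) k
  -- the curvature identity in scalar form
  have hcurvc : ∀ (a b : Fin m) (x : EuclideanSpace ℝ (Fin 2)),
      S16.pd 0 (fun y => A 1 y a b) x - S16.pd 1 (fun y => A 0 y a b) x
        = -(ψ 0 x a * ψ 1 x b - ψ 1 x a * ψ 0 x b)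
          - ∑ c, (A 0 x a c * A 1 x c b - A 1 x a c * A 0 x c b) := by
    intro a b x
    have h := congrFun (congrFun (hcurv 0 1 x) a) b
    simp only [Pi.sub_apply] at h
    rw [S16.fderiv_pi2_apply (hAd 1 x), S16.fderiv_pi2_apply (hAd 0 x)] at h
    exact h
  -- the torsion identity in scalar form
  have htorc : ∀ (x : EuclideanSpace ℝ (Fin 2)) (a : Fin m),
      Dop m A (ψ 1) 0 x a = Dop m A (ψ 0) 1 x a :=
    fun x a => congrArg (fun w => w a) (htor x)
  -- norms in scalar form
  have hnorm : ∀ (w : EuclideanSpace ℝ (Fin m)), ‖w‖^2 = ∑ a, (w a)^2 := by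
    intro w
    rw [EuclideanSpace.norm_eq, Real.sq_sqrt (Finset.sum_nonneg fun a _ => sq_nonneg _)]
    exact Finset.sum_congr rfl fun a _ => by rw [Real.norm_eq_abs, sq_abs]
  -- the divergence identity
  have hdiv : ∀ x : EuclideanSpace ℝ (Fin 2),
      S16.pd 0 (G 1) x - S16.pd 1 (G 0) x
        = ∑ a, (S16.pd 0 (fun y => ψ 0 y a) x * Dop m A (ψ 1) 1 x a
              - S16.pd 1 (fun y => ψ 0 y a) x * Dop m A (ψ 1) 0 x a)
          + ∑ a, ψ 0 x a * ∑ b, ((-(ψ 0 x a * ψ 1 x b - ψ 1 x a * ψ 0 x b)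
              - ∑ c, (A 0 x a c * A 1 x c b - A 1 x a c * A 0 x c b)) * ψ 1 x b
              + (A 1 x a b * S16.pd 0 (fun y => ψ 1 y b) x
                 - A 0 x a b * S16.pd 1 (fun y => ψ 1 y b) x)) := by
    intro x
    rw [hpdG 1 0 x, hpdG 0 1 x, ← Finset.sum_sub_distrib, ← Finset.sum_add_distrib]
    refine Finset.sum_congr rfl fun a _ => ?_
    rw [hpdDf 1 0 a x, hpdDf 0 1 a x]
    rw [S16.pd_comm (hψc 1 a) 0 1 x]
    have hsub : ∑ b, (S16.pd 0 (fun y => A 1 y a b) x * ψ 1 x b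
            + A 1 x a b * S16.pd 0 (fun y => ψ 1 y b) x)
          - ∑ b, (S16.pd 1 (fun y => A 0 y a b) x * ψ 1 x b
            + A 0 x a b * S16.pd 1 (fun y => ψ 1 y b) x)
        = ∑ b, ((-(ψ 0 x a * ψ 1 x b - ψ 1 x a * ψ 0 x b)
              - ∑ c, (A 0 x a c * A 1 x c b - A 1 x a c * A 0 x c b)) * ψ 1 x b
              + (A 1 x a b * S16.pd 0 (fun y => ψ 1 y b) x
                 - A 0 x a b * S16.pd 1 (fun y => ψ 1 y b) x)) := by
      rw [← Finset.sum_sub_distrib]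
      refine Finset.sum_congr rfl fun b _ => ?_
      rw [← hcurvc a b x]
      ring
    rw [← hsub]
    ring
  -- the key pointwise identity
  have key : ∀ x : EuclideanSpace ℝ (Fin 2),
      ‖∑ i, Dop m A (ψ i) i x‖ ^ 2
        = ((∑ i, ∑ j, ‖Dop m A (ψ i) j x‖ ^ 2)
            + (1 / 2) * ∑ i, ∑ j, ∑ a, ∑ b, (wedge m (ψ i x) (ψ j x) a b) ^ 2)
          + 2 * (S16.pd 0 (G 1) x - S16.pd 1 (G 0) x) := by
    intro x
    have e0 : ‖∑ i, Dop m A (ψ i) i x‖ ^ 2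
        = ∑ a, (Dop m A (ψ 0) 0 x a + Dop m A (ψ 1) 1 x a)^2 := by
      rw [Fin.sum_univ_two, hnorm]
      rfl
    have e1 : ∑ i, ∑ j, ‖Dop m A (ψ i) j x‖ ^ 2
        = ((∑ a, (Dop m A (ψ 0) 0 x a)^2 + ∑ a, (Dop m A (ψ 0) 1 x a)^2)
          + (∑ a, (Dop m A (ψ 1) 0 x a)^2 + ∑ a, (Dop m A (ψ 1) 1 x a)^2)) := by
      rw [Fin.sum_univ_two, Fin.sum_univ_two, Fin.sum_univ_two, hnorm, hnorm, hnorm, hnorm]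
    have e2 : ∑ i, ∑ j, ∑ a, ∑ b, (wedge m (ψ i x) (ψ j x) a b) ^ 2
        = ∑ a, ∑ b, (ψ 0 x a * ψ 1 x b - ψ 1 x a * ψ 0 x b)^2
          + ∑ a, ∑ b, (ψ 1 x a * ψ 0 x b - ψ 0 x a * ψ 1 x b)^2 := by
      rw [Fin.sum_univ_two, Fin.sum_univ_two, Fin.sum_univ_two]
      have z : ∀ w : EuclideanSpace ℝ (Fin m), ∑ a, ∑ b, (wedge m w w a b)^2 = 0 := by
        intro w
        simp [wedge]
      rw [z (ψ 0 x), z (ψ 1 x)]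
      have zw : ∀ v w : EuclideanSpace ℝ (Fin m), ∑ a, ∑ b, (wedge m v w a b)^2
          = ∑ a, ∑ b, (v a * w b - w a * v b)^2 := fun v w => rfl
      rw [zw, zw]
      ring
    rw [e0, e1, e2, hdiv x]
    exact algebra_key (fun a => ψ 0 x a) (fun a => ψ 1 x a)
      (fun a => S16.pd 0 (fun y => ψ 0 y a) x) (fun a => S16.pd 1 (fun y => ψ 0 y a) x)
      (fun a => S16.pd 0 (fun y => ψ 1 y a) x) (fun a => S16.pd 1 (fun y => ψ 1 y a) x)
      (fun a => Dop m A (ψ 0) 0 x a) (fun a => Dop m A (ψ 0) 1 x a)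
      (fun a => Dop m A (ψ 1) 0 x a) (fun a => Dop m A (ψ 1) 1 x a)
      (A 0 x) (A 1 x) (hanti 0 x) (hanti 1 x)
      (fun a => hDop 0 0 x a) (fun a => hDop 0 1 x a)
      (fun a => hDop 1 0 x a) (fun a => hDop 1 1 x a)
      (htorc x)
  -- integrability of the left-hand side integrand
  have htsc : ∀ i (a : Fin m), tsupport (fun y => ψ i y a) ⊆ tsupport (ψ i) := by
    intro i a
    apply closure_mono
    intro y hy
    simp only [Function.mem_support] at hy ⊢
    intro h
    exact hy (by rw [h]; rfl)
  have hK : IsCompact (tsupport (ψ 0) ∪ tsupport (ψ 1)) := (hψsupp 0).union (hψsupp 1)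
  have hout : ∀ (i : Fin 2) (x : EuclideanSpace ℝ (Fin 2)),
      x ∉ tsupport (ψ 0) ∪ tsupport (ψ 1) → ψ i x = 0 := by
    intro i x hx
    rw [Set.mem_union] at hx
    push_neg at hx
    fin_cases i
    · exact image_eq_zero_of_notMem_tsupport hx.1
    · exact image_eq_zero_of_notMem_tsupport hx.2
  have houtD : ∀ (i j : Fin 2) (x : EuclideanSpace ℝ (Fin 2)),
      x ∉ tsupport (ψ 0) ∪ tsupport (ψ 1) → ∀ a : Fin m, Dop m A (ψ i) j x a = 0 := by
    intro i j x hx a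
    rw [hDop i j x a]
    have h1 : S16.pd j (fun y => ψ i y a) x = 0 := by
      apply S16.pd_zero_of_nmem_tsupport
      intro hc
      apply hx
      have : x ∈ tsupport (ψ i) := htsc i a hc
      fin_cases i
      · exact Set.mem_union_left _ this
      · exact Set.mem_union_right _ this
    rw [h1, zero_add]
    refine Finset.sum_eq_zero fun b _ => ?_
    have : ψ i x b = 0 := by rw [hout i x hx]; rfl
    rw [this, mul_zero]
  set I1 : EuclideanSpace ℝ (Fin 2) → ℝ := fun x =>
    (∑ i, ∑ j, ‖Dop m A (ψ i) j x‖ ^ 2)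
      + (1 / 2) * ∑ i, ∑ j, ∑ a, ∑ b, (wedge m (ψ i x) (ψ j x) a b) ^ 2 with hI1def
  have hI1cont : Continuous I1 := by
    rw [hI1def]
    have hDcont : ∀ i j, Continuous fun x => ‖Dop m A (ψ i) j x‖ ^ 2 := by
      intro i j
      have : (fun x => ‖Dop m A (ψ i) j x‖ ^ 2) = fun x => ∑ a, (Dop m A (ψ i) j x a)^2 :=
        funext fun x => hnorm _
      rw [this]
      exact continuous_finset_sum _ fun a _ => ((hDfc i j a).continuous).pow 2
    have hwcont : ∀ (i j : Fin 2) (a b : Fin m),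
        Continuous fun x => (wedge m (ψ i x) (ψ j x) a b) ^ 2 := by
      intro i j a b
      have : (fun x => (wedge m (ψ i x) (ψ j x) a b) ^ 2)
          = fun x => (ψ i x a * ψ j x b - ψ j x a * ψ i x b)^2 := rfl
      rw [this]
      exact ((((hψc i a).continuous.mul (hψc j b).continuous).sub
        ((hψc j a).continuous.mul (hψc i b).continuous))).pow 2
    exact (continuous_finset_sum _ fun i _ => continuous_finset_sum _ fun j _ => hDcont i j).add
      (continuous_const.mul (continuous_finset_sum _ fun i _ => continuous_finset_sum _
        fun j _ => continuous_finset_sum _ fun a _ => continuous_finset_sum _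
          fun b _ => hwcont i j a b))
  have hI1supp : HasCompactSupport I1 := by
    apply HasCompactSupport.intro hK
    intro x hx
    rw [hI1def]
    have hD0 : ∀ i j, ‖Dop m A (ψ i) j x‖ ^ 2 = 0 := by
      intro i j
      rw [hnorm]
      exact Finset.sum_eq_zero fun a _ => by rw [houtD i j x hx a]; ring
    have hw0 : ∀ (i j : Fin 2) (a b : Fin m), (wedge m (ψ i x) (ψ j x) a b)^2 = 0 := by
      intro i j a b
      have h1 : ψ i x a = 0 := by rw [hout i x hx]; rfl
      show (ψ i x a * ψ j x b - ψ j x a * ψ i x b)^2 = 0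
      have h2 : ψ i x b = 0 := by rw [hout i x hx]; rfl
      rw [h1, h2, zero_mul, mul_zero, sub_zero]; ring
    simp only [hD0, hw0]
    simp
  have hI1int : Integrable I1 := hI1cont.integrable_of_hasCompactSupport hI1supp
  -- integrability of the divergence term
  have hdint : ∀ j k, Integrable (fun x => S16.pd k (G j) x) := fun j k =>
    ((S16.contDiff_pd (hGc j) k).continuous).integrable_of_hasCompactSupport
      (S16.hcs_pd (hGsupp j) k)
  have hdiv_int : Integrable (fun x => 2 * (S16.pd 0 (G 1) x - S16.pd 1 (G 0) x)) :=
    (((hdint 1 0).sub (hdint 0 1)).const_mul 2)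
  -- conclusion
  have hIeq : ∫ x, ‖∑ i, Dop m A (ψ i) i x‖ ^ 2
      = ∫ x, (I1 x + 2 * (S16.pd 0 (G 1) x - S16.pd 1 (G 0) x)) := by
    congr 1
    funext x
    rw [key x]
  rw [hIeq, integral_add hI1int hdiv_int]
  have hz : ∫ x, 2 * (S16.pd 0 (G 1) x - S16.pd 1 (G 0) x) = 0 := by
    rw [integral_const_mul, integral_sub (hdint 1 0) (hdint 0 1),
      S16.integral_pd_eq_zero (hGc 1) (hGsupp 1) 0,
      S16.integral_pd_eq_zero (hGc 0) (hGsupp 0) 1]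
    simp
  rw [hz, add_zero]

end
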